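/- arXiv:1808.00517 — 3 statements merged into one kernel-verified Lean document; each statement's English description precedes it below -/
import Mathlib

section
/- Let P(λ) = Σ_{i=0}^k λ^i A_i be an m×n matrix polynomial of grade k over F (F = ℝ or ℂ) and let L(λ) = λX + Y be a km×kn pencil, where X and Y are viewed as k×k block matrices with m×n blocks. Then for any v ∈ F^k, L(λ)(Λ_k(λ) ⊗ I_n) = v ⊗ P(λ) holds if and only if the column shifted sum X ⊞→ Y equals v ⊗ [A_k A_{k-1} … A_0]; and for any w ∈ F^k, (Λ_k(λ)^T ⊗ I_m)L(λ) = w^T ⊗ P(λ) holds if and only if the row shifted sum X ⊞↓ Y equals w^T ⊗ [A_k^T A_{k-1}^T … A_0^T]^T. -/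
noncomputable section

open Polynomial Matrix

namespace GLin

variable {F : Type*} [RCLike F]

/-! ### Matrix polynomials and pencils -/

/-- The matrix polynomial `P(λ) = ∑_{i=0}^k λ^i A_i` determined by its
coefficient matrices `A_0, …, A_k` (grade `k`). -/
def matPoly {k m n : ℕ} (A : Fin (k + 1) → Matrix (Fin m) (Fin n) F) :
    Matrix (Fin m) (Fin n) F[X] :=
  Matrix.of fun r c => ∑ i : Fin (k + 1), Polynomial.C (A i r c) * Polynomial.X ^ (i : ℕ)

/-- The matrix pencil `L(λ) = λ X + Y`. -/
def pencil {ρ γ : Type*} (Xc Yc : Matrix ρ γ F) : Matrix ρ γ F[X] :=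
  Matrix.of fun i j => Polynomial.C (Xc i j) * Polynomial.X + Polynomial.C (Yc i j)

/-- `Λ_k(λ) ⊗ I_n` where `Λ_k(λ) = (λ^{k-1}, …, λ, 1)ᵀ`. -/
def Lam (F : Type*) [RCLike F] (k n : ℕ) : Matrix (Fin k × Fin n) (Fin n) F[X] :=
  Matrix.of fun p c => if p.2 = c then Polynomial.X ^ (k - 1 - (p.1 : ℕ)) else 0

/-- `Λ_k(λ)ᵀ ⊗ I_m`. -/
def LamRow (F : Type*) [RCLike F] (k m : ℕ) : Matrix (Fin m) (Fin k × Fin m) F[X] :=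
  Matrix.of fun r p => if r = p.2 then Polynomial.X ^ (k - 1 - (p.1 : ℕ)) else 0

/-- `v ⊗ P(λ)`. -/
def vkron {k m n : ℕ} (v : Fin k → F) (P : Matrix (Fin m) (Fin n) F[X]) :
    Matrix (Fin k × Fin m) (Fin n) F[X] :=
  Matrix.of fun p c => Polynomial.C (v p.1) * P p.2 c

/-- `wᵀ ⊗ P(λ)`. -/
def wkron {k m n : ℕ} (w : Fin k → F) (P : Matrix (Fin m) (Fin n) F[X]) :
    Matrix (Fin m) (Fin k × Fin n) F[X] :=
  Matrix.of fun r q => Polynomial.C (w q.1) * P r q.2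

/-- The defining identity of `𝕃₁(P)`: `L(λ)(Λ_k(λ) ⊗ I_n) = v ⊗ P(λ)`. -/
def RightAnsatz {k m n : ℕ} (P : Matrix (Fin m) (Fin n) F[X])
    (L : Matrix (Fin k × Fin m) (Fin k × Fin n) F[X]) (v : Fin k → F) : Prop :=
  L * Lam F k n = vkron v P

/-- The defining identity of `𝕃₂(P)`: `(Λ_k(λ)ᵀ ⊗ I_m) L(λ) = wᵀ ⊗ P(λ)`. -/
def LeftAnsatz {k m n : ℕ} (P : Matrix (Fin m) (Fin n) F[X])
    (L : Matrix (Fin k × Fin m) (Fin k × Fin n) F[X]) (w : Fin k → F) : Prop :=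
  LamRow F k m * L = wkron w P

/-- The vector `α e₁ ∈ F^k`. -/
def e1 {k : ℕ} (α : F) : Fin k → F := fun i => if (i : ℕ) = 0 then α else 0

/-- `M ⊗ I_m`. -/
def kronId {k m : ℕ} (M : Matrix (Fin k) (Fin k) F) :
    Matrix (Fin k × Fin m) (Fin k × Fin m) F :=
  Matrix.of fun p q => if p.2 = q.2 then M p.1 q.1 else 0

/-! ### (strong) g-linearizations -/

/-- `diag(P(λ), I_{k-1} ⊗ I_{m,n})`. -/
def glinTarget {k m n : ℕ} (P : Matrix (Fin m) (Fin n) F[X]) :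
    Matrix (Fin k × Fin m) (Fin k × Fin n) F[X] :=
  Matrix.of fun p q =>
    if p.1 = q.1 then
      (if (p.1 : ℕ) = 0 then P p.2 q.2 else if (p.2 : ℕ) = (q.2 : ℕ) then 1 else 0)
    else 0

/-- A `km × kn` pencil (or matrix polynomial) `L` is a g-linearization of the `m × n`
matrix polynomial `P` of grade `k` if `E(λ) L(λ) G(λ) = diag(P(λ), I_{k-1} ⊗ I_{m,n})`
for unimodular `E`, `G`. -/
def IsGLin {k m n : ℕ} (P : Matrix (Fin m) (Fin n) F[X])
    (L : Matrix (Fin k × Fin m) (Fin k × Fin n) F[X]) : Prop :=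
  ∃ (E : Matrix (Fin k × Fin m) (Fin k × Fin m) F[X])
    (G : Matrix (Fin k × Fin n) (Fin k × Fin n) F[X]),
      IsUnit E.det ∧ IsUnit G.det ∧ E * L * G = glinTarget P

/-- grade-`N` reversal `rev_N P(λ) = λ^N P(1/λ)`, entrywise. -/
def revMat {ρ γ : Type*} (N : ℕ) (P : Matrix ρ γ F[X]) : Matrix ρ γ F[X] :=
  P.map fun p => Polynomial.reflect N p

/-- Strong g-linearization of the grade-`k` matrix polynomial with coefficients `A`. -/
def IsStrongGLin {k m n : ℕ} (A : Fin (k + 1) → Matrix (Fin m) (Fin n) F)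
    (L : Matrix (Fin k × Fin m) (Fin k × Fin n) F[X]) : Prop :=
  IsGLin (matPoly A) L ∧ IsGLin (revMat k (matPoly A)) (revMat 1 L)

/-! ### linearizations (rectangular, of size `(m+s) × (n+s)`) -/

/-- A matrix polynomial `L` (indexed by arbitrary finite types of cardinalities
`m + s` and `n + s`) is a linearization of `P` if, after identifying the index types
with `Fin m ⊕ Fin s` and `Fin n ⊕ Fin s`, one has `E(λ) L(λ) G(λ) = diag(P(λ), I_s)`
for unimodular `E`, `G`. -/
def IsLin {m n : ℕ} (s : ℕ) (P : Matrix (Fin m) (Fin n) F[X])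
    {ρ γ : Type*} [Fintype ρ] [DecidableEq ρ] [Fintype γ] [DecidableEq γ]
    (L : Matrix ρ γ F[X]) : Prop :=
  ∃ (er : ρ ≃ (Fin m ⊕ Fin s)) (ec : γ ≃ (Fin n ⊕ Fin s))
    (E : Matrix (Fin m ⊕ Fin s) (Fin m ⊕ Fin s) F[X])
    (G : Matrix (Fin n ⊕ Fin s) (Fin n ⊕ Fin s) F[X]),
      IsUnit E.det ∧ IsUnit G.det ∧
        E * Matrix.reindex er ec L * G = Matrix.fromBlocks P 0 0 1

/-- Strong linearization of the grade-`k` matrix polynomial with coefficients `A`. -/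
def IsStrongLin {k m n : ℕ} (s : ℕ) (A : Fin (k + 1) → Matrix (Fin m) (Fin n) F)
    {ρ γ : Type*} [Fintype ρ] [DecidableEq ρ] [Fintype γ] [DecidableEq γ]
    (L : Matrix ρ γ F[X]) : Prop :=
  IsLin s (matPoly A) L ∧ IsLin s (revMat k (matPoly A)) (revMat 1 L)

/-! ### shifted sums -/

/-- Column shifted sum `X ⊞→ Y`. -/
def colShiftSum {k m n : ℕ} (Xc Yc : Matrix (Fin k × Fin m) (Fin k × Fin n) F) :
    Matrix (Fin k × Fin m) (Fin (k + 1) × Fin n) F :=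
  Matrix.of fun p q =>
    (if h : (q.1 : ℕ) < k then Xc p (⟨(q.1 : ℕ), h⟩, q.2) else 0) +
    (if h : 0 < (q.1 : ℕ) then
        Yc p (⟨(q.1 : ℕ) - 1, by have := q.1.isLt; omega⟩, q.2)
      else 0)

/-- Row shifted sum `X ⊞↓ Y`. -/
def rowShiftSum {k m n : ℕ} (Xc Yc : Matrix (Fin k × Fin m) (Fin k × Fin n) F) :
    Matrix (Fin (k + 1) × Fin m) (Fin k × Fin n) F :=
  Matrix.of fun p q =>
    (if h : (p.1 : ℕ) < k then Xc (⟨(p.1 : ℕ), h⟩, p.2) q else 0) +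
    (if h : 0 < (p.1 : ℕ) then
        Yc (⟨(p.1 : ℕ) - 1, by have := p.1.isLt; omega⟩, p.2) q
      else 0)

/-! ### the parametrization of `𝕃₁(P)` and `𝕃₂(P)` -/

/-- `X = [v ⊗ A_k ∣ -W]`. -/
def L1X {k m n : ℕ} (A : Fin (k + 1) → Matrix (Fin m) (Fin n) F) (v : Fin k → F)
    (W : Matrix (Fin k × Fin m) (Fin (k - 1) × Fin n) F) :
    Matrix (Fin k × Fin m) (Fin k × Fin n) F :=
  Matrix.of fun p q =>
    if h : (q.1 : ℕ) = 0 then v p.1 * A (Fin.last k) p.2 q.2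
    else -W p (⟨(q.1 : ℕ) - 1, by have := q.1.isLt; omega⟩, q.2)

/-- `Y = [W + v ⊗ [A_{k-1} ⋯ A_1] ∣ v ⊗ A_0]`. -/
def L1Y {k m n : ℕ} (A : Fin (k + 1) → Matrix (Fin m) (Fin n) F) (v : Fin k → F)
    (W : Matrix (Fin k × Fin m) (Fin (k - 1) × Fin n) F) :
    Matrix (Fin k × Fin m) (Fin k × Fin n) F :=
  Matrix.of fun p q =>
    if h : (q.1 : ℕ) < k - 1 then
      W p (⟨(q.1 : ℕ), h⟩, q.2) + v p.1 * A (⟨k - 1 - (q.1 : ℕ), by omega⟩) p.2 q.2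
    else v p.1 * A 0 p.2 q.2

/-- `X = [wᵀ ⊗ A_k ; -Ŵ]`. -/
def L2X {k m n : ℕ} (A : Fin (k + 1) → Matrix (Fin m) (Fin n) F) (w : Fin k → F)
    (W : Matrix (Fin (k - 1) × Fin m) (Fin k × Fin n) F) :
    Matrix (Fin k × Fin m) (Fin k × Fin n) F :=
  Matrix.of fun p q =>
    if h : (p.1 : ℕ) = 0 then w q.1 * A (Fin.last k) p.2 q.2
    else -W (⟨(p.1 : ℕ) - 1, by have := p.1.isLt; omega⟩, p.2) q

/-- `Y = [Ŵ + wᵀ ⊗ [A_{k-1}ᵀ ⋯ A_1ᵀ]ᵀ ; wᵀ ⊗ A_0]`. -/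
def L2Y {k m n : ℕ} (A : Fin (k + 1) → Matrix (Fin m) (Fin n) F) (w : Fin k → F)
    (W : Matrix (Fin (k - 1) × Fin m) (Fin k × Fin n) F) :
    Matrix (Fin k × Fin m) (Fin k × Fin n) F :=
  Matrix.of fun p q =>
    if h : (p.1 : ℕ) < k - 1 then
      W (⟨(p.1 : ℕ), h⟩, p.2) q + w q.1 * A (⟨k - 1 - (p.1 : ℕ), by omega⟩) p.2 q.2
    else w q.1 * A 0 p.2 q.2

/-! ### block structure and `Z`-matrices -/

/-- Assemble a `km × kn` matrix from blocks with row split `m + (k-1)m` and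
column split `n + (k-1)n`. -/
def blk {k m n : ℕ} (TL : Matrix (Fin m) (Fin n) F)
    (TR : Matrix (Fin m) (Fin (k - 1) × Fin n) F)
    (BL : Matrix (Fin (k - 1) × Fin m) (Fin n) F)
    (BR : Matrix (Fin (k - 1) × Fin m) (Fin (k - 1) × Fin n) F) :
    Matrix (Fin k × Fin m) (Fin k × Fin n) F :=
  Matrix.of fun p q =>
    if hp : (p.1 : ℕ) = 0 then
      if hq : (q.1 : ℕ) = 0 then TL p.2 q.2
      else TR p.2 (⟨(q.1 : ℕ) - 1, by have := q.1.isLt; omega⟩, q.2)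
    else
      if hq : (q.1 : ℕ) = 0 then
        BL (⟨(p.1 : ℕ) - 1, by have := p.1.isLt; omega⟩, p.2) q.2
      else
        BR (⟨(p.1 : ℕ) - 1, by have := p.1.isLt; omega⟩, p.2)
          (⟨(q.1 : ℕ) - 1, by have := q.1.isLt; omega⟩, q.2)

/-- Assemble `[[Y₁₁, T],[Z, 0]]`, row split `m + (k-1)m`, column split `(k-1)n + n`. -/
def blkY1 {k m n : ℕ} (Y11 : Matrix (Fin m) (Fin (k - 1) × Fin n) F)
    (T : Matrix (Fin m) (Fin n) F)
    (Z : Matrix (Fin (k - 1) × Fin m) (Fin (k - 1) × Fin n) F) :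
    Matrix (Fin k × Fin m) (Fin k × Fin n) F :=
  Matrix.of fun p q =>
    if hp : (p.1 : ℕ) = 0 then
      if hq : (q.1 : ℕ) < k - 1 then Y11 p.2 (⟨(q.1 : ℕ), hq⟩, q.2) else T p.2 q.2
    else
      if hq : (q.1 : ℕ) < k - 1 then
        Z (⟨(p.1 : ℕ) - 1, by have := p.1.isLt; omega⟩, p.2) (⟨(q.1 : ℕ), hq⟩, q.2)
      else 0

/-- Assemble `[[Y₁₁, Z],[T, 0]]`, row split `(k-1)m + m`, column split `n + (k-1)n`. -/
def blkY2 {k m n : ℕ} (Y11 : Matrix (Fin (k - 1) × Fin m) (Fin n) F)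
    (Z : Matrix (Fin (k - 1) × Fin m) (Fin (k - 1) × Fin n) F)
    (T : Matrix (Fin m) (Fin n) F) :
    Matrix (Fin k × Fin m) (Fin k × Fin n) F :=
  Matrix.of fun p q =>
    if hp : (p.1 : ℕ) < k - 1 then
      if hq : (q.1 : ℕ) = 0 then Y11 (⟨(p.1 : ℕ), hp⟩, p.2) q.2
      else Z (⟨(p.1 : ℕ), hp⟩, p.2) (⟨(q.1 : ℕ) - 1, by have := q.1.isLt; omega⟩, q.2)
    else
      if hq : (q.1 : ℕ) = 0 then T p.2 q.2 else 0

/-- The `Z`-matrix of `L = λX + Y ∈ 𝕃₁(P)` with respect to `M`: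
the lower-left `(k-1)m × (k-1)n` block of `(M ⊗ I_m) Y`. -/
def Zmat1 {k m n : ℕ} (M : Matrix (Fin k) (Fin k) F)
    (Yc : Matrix (Fin k × Fin m) (Fin k × Fin n) F) :
    Matrix (Fin (k - 1) × Fin m) (Fin (k - 1) × Fin n) F :=
  Matrix.of fun p q =>
    (kronId M * Yc : Matrix (Fin k × Fin m) (Fin k × Fin n) F)
      (⟨(p.1 : ℕ) + 1, by have := p.1.isLt; omega⟩, p.2)
      (⟨(q.1 : ℕ), by have := q.1.isLt; omega⟩, q.2)

/-- The `Z`-matrix of `L = λX + Y ∈ 𝕃₂(P)` with respect to `M̂`: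
the upper-right `(k-1)m × (k-1)n` block of `Y (M̂ᵀ ⊗ I_n)`. -/
def Zmat2 {k m n : ℕ} (M : Matrix (Fin k) (Fin k) F)
    (Yc : Matrix (Fin k × Fin m) (Fin k × Fin n) F) :
    Matrix (Fin (k - 1) × Fin m) (Fin (k - 1) × Fin n) F :=
  Matrix.of fun p q =>
    (Yc * kronId Mᵀ : Matrix (Fin k × Fin m) (Fin k × Fin n) F)
      (⟨(p.1 : ℕ), by have := p.1.isLt; omega⟩, p.2)
      (⟨(q.1 : ℕ) + 1, by have := q.1.isLt; omega⟩, q.2)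

/-- `L = λX + Y ∈ 𝕃₁(P)` with right ansatz vector `v` has full `Z`-rank. -/
def FullZrank1 {k m n : ℕ} (Yc : Matrix (Fin k × Fin m) (Fin k × Fin n) F)
    (v : Fin k → F) : Prop :=
  ∃ (M : Matrix (Fin k) (Fin k) F) (α : F),
    IsUnit M ∧ α ≠ 0 ∧ M.mulVec v = e1 α ∧ (Zmat1 M Yc).rank = (k - 1) * n

/-- `L = λX + Y ∈ 𝕃₂(P)` with left ansatz vector `w` has full `Z`-rank. -/
def FullZrank2 {k m n : ℕ} (Yc : Matrix (Fin k × Fin m) (Fin k × Fin n) F)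
    (w : Fin k → F) : Prop :=
  ∃ (M : Matrix (Fin k) (Fin k) F) (α : F),
    IsUnit M ∧ α ≠ 0 ∧ M.mulVec w = e1 α ∧ (Zmat2 M Yc).rank = (k - 1) * m

/-! ### null spaces, minimal bases and minimal indices over `F(λ)` -/

/-- A matrix polynomial viewed as a matrix over the field of rational functions. -/
def matRF {ρ γ : Type*} (P : Matrix ρ γ F[X]) : Matrix ρ γ (RatFunc F) :=
  P.map (algebraMap F[X] (RatFunc F))

/-- The right null space `N_r(P) = {x(λ) : P(λ) x(λ) ≡ 0}` over `F(λ)`. -/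
def Nr {ρ γ : Type*} [Fintype γ] (P : Matrix ρ γ F[X]) :
    Submodule (RatFunc F) (γ → RatFunc F) :=
  LinearMap.ker (Matrix.mulVecLin (matRF P))

/-- The left null space `N_l(P) = {y(λ) : y(λ)ᵀ P(λ) ≡ 0}` over `F(λ)`. -/
def Nl {ρ γ : Type*} [Fintype ρ] (P : Matrix ρ γ F[X]) :
    Submodule (RatFunc F) (ρ → RatFunc F) :=
  Nr Pᵀ

/-- The normal rank of a matrix polynomial: its rank over `F(λ)`. -/
def nrank {ρ γ : Type*} [Fintype γ] (P : Matrix ρ γ F[X]) : ℕ :=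
  (matRF P).rank

/-- The rational vector determined by a vector polynomial. -/
def polyVec {γ : Type*} (x : γ → F[X]) : γ → RatFunc F :=
  fun i => algebraMap F[X] (RatFunc F) (x i)

/-- A rational vector is a vector polynomial if all its entries are polynomials. -/
def IsVecPoly {γ : Type*} (x : γ → RatFunc F) : Prop :=
  ∃ p : γ → F[X], x = polyVec p

/-- The degree of a vector polynomial: the greatest degree of its components. -/
def polyVecDeg {γ : Type*} [Fintype γ] (x : γ → F[X]) : ℕ :=
  Finset.univ.sup fun i => (x i).natDegree

/-- A polynomial basis of the subspace `V` of `F(λ)^γ`. -/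
def IsPolyBasis {γ ι : Type*} [Fintype γ]
    (V : Submodule (RatFunc F) (γ → RatFunc F)) (b : ι → γ → F[X]) : Prop :=
  LinearIndependent (RatFunc F) (fun i => polyVec (b i)) ∧
    Submodule.span (RatFunc F) (Set.range fun i => polyVec (b i)) = V

/-- A minimal basis of `V`: a polynomial basis of least order (sum of degrees). -/
def IsMinimalBasis {γ ι : Type*} [Fintype γ] [Fintype ι]
    (V : Submodule (RatFunc F) (γ → RatFunc F)) (b : ι → γ → F[X]) : Prop :=
  IsPolyBasis V b ∧
    ∀ (d : ℕ) (b' : Fin d → γ → F[X]), IsPolyBasis V b' →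
      ∑ i, polyVecDeg (b i) ≤ ∑ i, polyVecDeg (b' i)

/-- `ε` is the list of minimal indices of `V`: some minimal basis of `V` has
`ε` as its list of degrees. -/
def HasMinIndices {γ : Type*} [Fintype γ]
    (V : Submodule (RatFunc F) (γ → RatFunc F)) {d : ℕ} (ε : Fin d → ℕ) : Prop :=
  ∃ b : Fin d → γ → F[X], IsMinimalBasis V b ∧ ∀ i, polyVecDeg (b i) = ε i

/-- `Λ_k(λ) ⊗ x(λ)`. -/
def lamTensor {n : ℕ} (k : ℕ) (x : Fin n → RatFunc F) : Fin k × Fin n → RatFunc F :=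
  fun p => algebraMap F[X] (RatFunc F) (Polynomial.X ^ (k - 1 - (p.1 : ℕ))) * x p.2

/-- The matrix `vᵀ ⊗ I_m` over `F(λ)`; `𝓛_v(y) = (vproj v).mulVec y`. -/
def vproj {k m : ℕ} (v : Fin k → F) : Matrix (Fin m) (Fin k × Fin m) (RatFunc F) :=
  Matrix.of fun r p =>
    if r = p.2 then algebraMap F[X] (RatFunc F) (Polynomial.C (v p.1)) else 0

/-- `(vᵀ ⊗ I_m) y` at the level of vector polynomials. -/
def LvPoly {k m : ℕ} (v : Fin k → F) (y : Fin k × Fin m → F[X]) : Fin m → F[X] :=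
  fun r => ∑ i : Fin k, Polynomial.C (v i) * y (i, r)

/-- The rational subspace spanned by the rows of a matrix polynomial. -/
def rowSpan {ρ γ : Type*} [Fintype γ] (B : Matrix ρ γ F[X]) :
    Submodule (RatFunc F) (γ → RatFunc F) :=
  Submodule.span (RatFunc F) (Set.range fun i => polyVec (B i))

/-- A matrix polynomial is a minimal basis if its rows form a minimal basis of the
rational subspace they span. -/
def IsMinimalBasisMat {ρ γ : Type*} [Fintype ρ] [Fintype γ] (B : Matrix ρ γ F[X]) : Prop :=
  IsMinimalBasis (rowSpan B) (fun i => B i)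

/-- Dual minimal bases: `B ∈ F[λ]^{n₁×n}`, `C ∈ F[λ]^{n₂×n}` minimal bases with
`n₁ + n₂ = n` and `B Cᵀ = 0`. -/
def DualMinBases {ρ ρ' γ : Type*} [Fintype ρ] [Fintype ρ'] [Fintype γ]
    (B : Matrix ρ γ F[X]) (Cm : Matrix ρ' γ F[X]) : Prop :=
  IsMinimalBasisMat B ∧ IsMinimalBasisMat Cm ∧
    Fintype.card ρ + Fintype.card ρ' = Fintype.card γ ∧ B * Cmᵀ = 0

/-! ### norms, singular values -/

/-- Square of the Frobenius norm of a constant matrix. -/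
def frobSq {ρ γ : Type*} [Fintype ρ] [Fintype γ] (Ac : Matrix ρ γ F) : ℝ :=
  ∑ i, ∑ j, ‖Ac i j‖ ^ 2

/-- `‖λX + Y‖_F = sqrt(‖X‖_F² + ‖Y‖_F²)`. -/
def penFrob {ρ γ : Type*} [Fintype ρ] [Fintype γ] (Xc Yc : Matrix ρ γ F) : ℝ :=
  Real.sqrt (frobSq Xc + frobSq Yc)

/-- `‖P‖_F = sqrt(∑ ‖A_i‖_F²)` for `P(λ) = ∑ λ^i A_i`. -/
def famFrob {k m n : ℕ} (A : Fin (k + 1) → Matrix (Fin m) (Fin n) F) : ℝ :=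
  Real.sqrt (∑ i, frobSq (A i))

/-- `‖P‖_F` for a matrix polynomial of grade `g`. -/
def mpolyFrob {ρ γ : Type*} [Fintype ρ] [Fintype γ] (g : ℕ) (P : Matrix ρ γ F[X]) : ℝ :=
  Real.sqrt (∑ i, ∑ j, ∑ d ∈ Finset.range (g + 1), ‖(P i j).coeff d‖ ^ 2)

/-- Square of the Euclidean norm of a vector. -/
def vecNormSq {ι : Type*} [Fintype ι] (x : ι → F) : ℝ := ∑ i, ‖x i‖ ^ 2

/-- The smallest singular value of a matrix. -/
def sigmaMin {ρ γ : Type*} [Fintype ρ] [Fintype γ] (Ac : Matrix ρ γ F) : ℝ :=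
  if Fintype.card γ ≤ Fintype.card ρ then
    sInf {r : ℝ | ∃ x : γ → F, vecNormSq x = 1 ∧ r = Real.sqrt (vecNormSq (Ac.mulVec x))}
  else
    sInf {r : ℝ | ∃ y : ρ → F, vecNormSq y = 1 ∧ r = Real.sqrt (vecNormSq (Acᴴ.mulVec y))}

/-- The spectral norm (2-norm) of a matrix. -/
def norm2 {ρ γ : Type*} [Fintype ρ] [Fintype γ] (Ac : Matrix ρ γ F) : ℝ :=
  sSup {r : ℝ | ∃ x : γ → F, vecNormSq x = 1 ∧ r = Real.sqrt (vecNormSq (Ac.mulVec x))}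

/-- `κ₂(D) = ‖D‖₂ ‖D⁻¹‖₂`. -/
def cond2 {ρ : Type*} [Fintype ρ] [DecidableEq ρ] (Dc : Matrix ρ ρ F) : ℝ :=
  norm2 Dc * norm2 Dc⁻¹

/-! ### pencils used in the backward error analysis -/

/-- `B(λ) = λ [0 ∣ -R̃] + [R̃ ∣ 0]`, i.e. `R̃ (H_{k-1}(λ) ⊗ I_n)` up to sign conventions. -/
def Bpencil {k n : ℕ} (R : Matrix (Fin (k - 1) × Fin n) (Fin (k - 1) × Fin n) F) :
    Matrix (Fin (k - 1) × Fin n) (Fin k × Fin n) F[X] :=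
  Matrix.of fun p q =>
    (if h : (q.1 : ℕ) < k - 1 then Polynomial.C (R p (⟨(q.1 : ℕ), h⟩, q.2)) else 0) +
    (if h : 0 < (q.1 : ℕ) then
        Polynomial.X *
          Polynomial.C (-R p (⟨(q.1 : ℕ) - 1, by have := q.1.isLt; omega⟩, q.2))
      else 0)

/-- The coefficient of `λ` in `H_{k-1}(λ) ⊗ I_n`. -/
def Hlam (F : Type*) [RCLike F] (k n : ℕ) :
    Matrix (Fin (k - 1) × Fin n) (Fin k × Fin n) F :=
  Matrix.of fun p q => if p.2 = q.2 ∧ (q.1 : ℕ) = (p.1 : ℕ) + 1 then 1 else 0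

/-- The constant coefficient of `H_{k-1}(λ) ⊗ I_n`. -/
def Hconst (F : Type*) [RCLike F] (k n : ℕ) :
    Matrix (Fin (k - 1) × Fin n) (Fin k × Fin n) F :=
  Matrix.of fun p q => if p.2 = q.2 ∧ (q.1 : ℕ) = (p.1 : ℕ) then -1 else 0

/-- The convolution matrix `C_j(λ Xc + Yc)` of a pencil, with `j+1` block columns. -/
def convPencil {ρ γ : Type*} (Xc Yc : Matrix ρ γ F) (j : ℕ) :
    Matrix (Fin (j + 2) × ρ) (Fin (j + 1) × γ) F :=
  Matrix.of fun r c =>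
    if (r.1 : ℕ) = (c.1 : ℕ) then Xc r.2 c.2
    else if (r.1 : ℕ) = (c.1 : ℕ) + 1 then Yc r.2 c.2 else 0

/-- λ-coefficient of the trimmed pencil `L̂_t(λ)`:
`[[α A_k, X₁₂],[0, -R̃]]` with row split `m + (k-1)n`. -/
def LtX {k m n : ℕ} (α : F) (Ak : Matrix (Fin m) (Fin n) F)
    (X12 : Matrix (Fin m) (Fin (k - 1) × Fin n) F)
    (R : Matrix (Fin (k - 1) × Fin n) (Fin (k - 1) × Fin n) F) :
    Matrix (Fin m ⊕ (Fin (k - 1) × Fin n)) (Fin k × Fin n) F :=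
  Matrix.of fun s q =>
    Sum.elim
      (fun r => if h : (q.1 : ℕ) = 0 then α * Ak r q.2
        else X12 r (⟨(q.1 : ℕ) - 1, by have := q.1.isLt; omega⟩, q.2))
      (fun p => if h : (q.1 : ℕ) = 0 then 0
        else -R p (⟨(q.1 : ℕ) - 1, by have := q.1.isLt; omega⟩, q.2)) s

/-- Constant coefficient of the trimmed pencil `L̂_t(λ)`:
`[[Y₁₁, α A₀],[R̃, 0]]` with row split `m + (k-1)n`. -/
def LtY {k m n : ℕ} (α : F) (A0 : Matrix (Fin m) (Fin n) F)
    (Y11 : Matrix (Fin m) (Fin (k - 1) × Fin n) F)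
    (R : Matrix (Fin (k - 1) × Fin n) (Fin (k - 1) × Fin n) F) :
    Matrix (Fin m ⊕ (Fin (k - 1) × Fin n)) (Fin k × Fin n) F :=
  Matrix.of fun s q =>
    Sum.elim
      (fun r => if h : (q.1 : ℕ) < k - 1 then Y11 r (⟨(q.1 : ℕ), h⟩, q.2)
        else α * A0 r q.2)
      (fun p => if h : (q.1 : ℕ) < k - 1 then R p (⟨(q.1 : ℕ), h⟩, q.2) else 0) s

/-! ### trimming -/

/-- The rows `[0 ∣ Q₂*] (M ⊗ I_m)`. -/
def bottomRows {k m n c : ℕ} (M : Matrix (Fin k) (Fin k) F)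
    (Q : Matrix (Fin (k - 1) × Fin m) ((Fin (k - 1) × Fin n) ⊕ Fin c) F) :
    Matrix (Fin c) (Fin k × Fin m) F :=
  (Matrix.of fun (j : Fin c) (p : Fin k × Fin m) =>
      if h : (p.1 : ℕ) = 0 then 0
      else star (Q (⟨(p.1 : ℕ) - 1, by have := p.1.isLt; omega⟩, p.2) (Sum.inr j)))
    * kronId M

/-- The square matrix `[D ; [0 ∣ Q₂*](M ⊗ I_m)]` whose invertibility makes `D` admissible. -/
def trimAux {k m n c : ℕ} (M : Matrix (Fin k) (Fin k) F)
    (Q : Matrix (Fin (k - 1) × Fin m) ((Fin (k - 1) × Fin n) ⊕ Fin c) F)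
    (D : Matrix (Fin m ⊕ (Fin (k - 1) × Fin n)) (Fin k × Fin m) F) :
    Matrix ((Fin m ⊕ (Fin (k - 1) × Fin n)) ⊕ Fin c) (Fin k × Fin m) F :=
  Matrix.of (Sum.elim (fun i j => D i j) (fun i j => bottomRows M Q i j))

/-- The columns `(M̂ᵀ ⊗ I_n) [0 ; Q₂]`. -/
def rightCols {k m n c : ℕ} (M : Matrix (Fin k) (Fin k) F)
    (Q : Matrix (Fin (k - 1) × Fin n) ((Fin (k - 1) × Fin m) ⊕ Fin c) F) :
    Matrix (Fin k × Fin n) (Fin c) F :=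
  kronId Mᵀ *
    (Matrix.of fun (q : Fin k × Fin n) (j : Fin c) =>
      if h : (q.1 : ℕ) = 0 then 0
      else Q (⟨(q.1 : ℕ) - 1, by have := q.1.isLt; omega⟩, q.2) (Sum.inr j))

/-- The square matrix `[D̂ ∣ (M̂ᵀ ⊗ I_n)[0 ; Q₂]]` whose invertibility makes `D̂` admissible. -/
def trimAux2 {k m n c : ℕ} (M : Matrix (Fin k) (Fin k) F)
    (Q : Matrix (Fin (k - 1) × Fin n) ((Fin (k - 1) × Fin m) ⊕ Fin c) F)
    (D : Matrix (Fin k × Fin n) (Fin n ⊕ (Fin (k - 1) × Fin m)) F) :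
    Matrix (Fin k × Fin n) ((Fin n ⊕ (Fin (k - 1) × Fin m)) ⊕ Fin c) F :=
  Matrix.of fun q s => Sum.elim (fun t => D q t) (fun j => rightCols M Q q j) s

/-! Compare coefficients: the coefficient of `λ^(k-i)` in `L(λ)(Λ_k(λ) ⊗ I_n)` is block column `i`
of `X ⊞→ Y`, since `λX` and `Y` meet `λ^(k-1-j)` in degrees `k-j` and `k-1-j`; that of
`v ⊗ P(λ)` is `v ⊗ A_{k-i}`, and neither side has terms of degree above `k`. The row version is
the transpose of the column version. -/

section Ansatz

omit [RCLike F] in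
lemma sum_ite_val_eq {M : Type*} [AddCommMonoid M] {k : ℕ} (g : Fin k → M) (a : ℕ) :
    ∑ j : Fin k, (if (j : ℕ) = a then g j else 0) = if h : a < k then g ⟨a, h⟩ else 0 := by
  split_ifs with h
  · rw [Finset.sum_eq_single ⟨a, h⟩ (fun j _ hj => if_neg fun hja => hj (Fin.ext hja))
      (by simp)]
    simp
  · exact Finset.sum_eq_zero fun j _ => if_neg (by omega)

lemma coeff_pencil_mul_Lam {k m n : ℕ} (Xc Yc : Matrix (Fin k × Fin m) (Fin k × Fin n) F)
    (p : Fin k × Fin m) (c : Fin n) (d : ℕ) :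
    ((pencil Xc Yc * Lam F k n) p c).coeff d =
      ∑ j : Fin k, ((if d = k - 1 - j + 1 then Xc p (j, c) else 0) +
        (if d = k - 1 - j then Yc p (j, c) else 0)) := by
  simp only [Matrix.mul_apply, Fintype.sum_prod_type, pencil, Lam, Matrix.of_apply, mul_ite,
    mul_zero, Finset.sum_ite_eq', Finset.mem_univ, if_true, Polynomial.finsetSum_coeff]
  refine Finset.sum_congr rfl fun j _ => ?_
  rw [add_mul, mul_assoc, ← pow_succ']
  simp [Polynomial.coeff_C_mul, Polynomial.coeff_X_pow]

lemma coeff_pencil_mul_Lam_eq_colShiftSum {k m n : ℕ}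
    (Xc Yc : Matrix (Fin k × Fin m) (Fin k × Fin n) F)
    (p : Fin k × Fin m) (c : Fin n) (i : Fin (k + 1)) :
    ((pencil Xc Yc * Lam F k n) p c).coeff (k - i) = colShiftSum Xc Yc p (i, c) := by
  have hi := i.isLt
  rw [coeff_pencil_mul_Lam, Finset.sum_add_distrib, colShiftSum, Matrix.of_apply]
  dsimp only
  congr 1
  · rw [← sum_ite_val_eq (fun j : Fin k => Xc p (j, c))]
    exact Finset.sum_congr rfl fun j _ => if_congr (by omega) rfl rfl
  · by_cases h0 : 0 < (i : ℕ)
    · rw [dif_pos h0]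
      calc _ = ∑ j : Fin k, (if (j : ℕ) = i - 1 then Yc p (j, c) else 0) :=
            Finset.sum_congr rfl fun j _ => if_congr (by omega) rfl rfl
        _ = _ := by rw [sum_ite_val_eq, dif_pos (by omega)]
    · rw [dif_neg h0]
      exact Finset.sum_eq_zero fun j _ => if_neg (by omega)

lemma coeff_pencil_mul_Lam_of_lt {k m n : ℕ} (Xc Yc : Matrix (Fin k × Fin m) (Fin k × Fin n) F)
    (p : Fin k × Fin m) (c : Fin n) {d : ℕ} (hd : k < d) :
    ((pencil Xc Yc * Lam F k n) p c).coeff d = 0 := by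
  rw [coeff_pencil_mul_Lam]
  exact Finset.sum_eq_zero fun j _ => by rw [if_neg (by omega), if_neg (by omega), add_zero]

lemma coeff_vkron_matPoly {k m n : ℕ} (A : Fin (k + 1) → Matrix (Fin m) (Fin n) F)
    (v : Fin k → F) (p : Fin k × Fin m) (c : Fin n) (d : ℕ) :
    (vkron v (matPoly A) p c).coeff d =
      if h : d ≤ k then v p.1 * A ⟨d, by omega⟩ p.2 c else 0 := by
  simp only [vkron, matPoly, Matrix.of_apply, Polynomial.coeff_C_mul,
    Polynomial.finsetSum_coeff, Polynomial.coeff_X_pow, Finset.mul_sum, mul_ite, mul_one,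
    mul_zero]
  simp only [eq_comm (a := d)]
  rw [sum_ite_val_eq (fun l => v p.1 * A l p.2 c)]
  simp only [Nat.lt_succ_iff]

lemma rightAnsatz_pencil_iff_colShiftSum {k m n : ℕ}
    (A : Fin (k + 1) → Matrix (Fin m) (Fin n) F)
    (Xc Yc : Matrix (Fin k × Fin m) (Fin k × Fin n) F) (v : Fin k → F) :
    RightAnsatz (matPoly A) (pencil Xc Yc) v ↔
      colShiftSum Xc Yc =
        Matrix.of fun (p : Fin k × Fin m) (q : Fin (k + 1) × Fin n) =>
          v p.1 * A ⟨k - (q.1 : ℕ), by omega⟩ p.2 q.2 := by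
  rw [RightAnsatz]
  constructor
  · intro h
    ext p ⟨i, c⟩
    have hcoeff := congrArg (fun M => (M p c).coeff (k - i)) h
    simpa only [coeff_pencil_mul_Lam_eq_colShiftSum, coeff_vkron_matPoly,
      dif_pos (Nat.sub_le k i), Matrix.of_apply] using hcoeff
  · intro h
    ext p c d
    rcases le_or_gt d k with hd | hd
    · obtain ⟨i, rfl⟩ : ∃ i : Fin (k + 1), d = k - i := ⟨⟨k - d, by omega⟩, by simp; omega⟩
      rw [coeff_pencil_mul_Lam_eq_colShiftSum, h, coeff_vkron_matPoly, dif_pos hd]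
      rfl
    · rw [coeff_pencil_mul_Lam_of_lt _ _ _ _ hd, coeff_vkron_matPoly, dif_neg (by omega)]

lemma pencil_transpose {ρ γ : Type*} (Xc Yc : Matrix ρ γ F) :
    (pencil Xc Yc)ᵀ = pencil Xcᵀ Ycᵀ := rfl

lemma LamRow_transpose (k m : ℕ) : (LamRow F k m)ᵀ = Lam F k m := by
  ext p r
  simp only [LamRow, Lam, Matrix.transpose_apply, Matrix.of_apply, eq_comm]

lemma wkron_transpose {k m n : ℕ} (w : Fin k → F) (P : Matrix (Fin m) (Fin n) F[X]) :
    (wkron w P)ᵀ = vkron w Pᵀ := rfl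

lemma matPoly_transpose {k m n : ℕ} (A : Fin (k + 1) → Matrix (Fin m) (Fin n) F) :
    (matPoly A)ᵀ = matPoly fun i => (A i)ᵀ := rfl

lemma rowShiftSum_eq_transpose_colShiftSum {k m n : ℕ}
    (Xc Yc : Matrix (Fin k × Fin m) (Fin k × Fin n) F) :
    rowShiftSum Xc Yc = (colShiftSum Xcᵀ Ycᵀ)ᵀ := rfl

lemma leftAnsatz_iff_rightAnsatz_transpose {k m n : ℕ} (P : Matrix (Fin m) (Fin n) F[X])
    (L : Matrix (Fin k × Fin m) (Fin k × Fin n) F[X]) (w : Fin k → F) :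
    LeftAnsatz P L w ↔ RightAnsatz Pᵀ Lᵀ w := by
  rw [LeftAnsatz, RightAnsatz, ← LamRow_transpose, ← wkron_transpose, ← Matrix.transpose_mul,
    Matrix.transpose_inj]

lemma leftAnsatz_pencil_iff_rowShiftSum {k m n : ℕ}
    (A : Fin (k + 1) → Matrix (Fin m) (Fin n) F)
    (Xc Yc : Matrix (Fin k × Fin m) (Fin k × Fin n) F) (w : Fin k → F) :
    LeftAnsatz (matPoly A) (pencil Xc Yc) w ↔
      rowShiftSum Xc Yc =
        Matrix.of fun (p : Fin (k + 1) × Fin m) (q : Fin k × Fin n) =>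
          w q.1 * A ⟨k - (p.1 : ℕ), by omega⟩ p.2 q.2 := by
  rw [leftAnsatz_iff_rightAnsatz_transpose, pencil_transpose, matPoly_transpose,
    rightAnsatz_pencil_iff_colShiftSum, rowShiftSum_eq_transpose_colShiftSum,
    ← Matrix.transpose_inj]
  rfl

end Ansatz

/-- For a grade-`k`, `m × n` matrix polynomial `P(λ) = ∑ λ^i A_i` and a
`km × kn` pencil `L(λ) = λX + Y`: for every `v`, `L(λ)(Λ_k(λ) ⊗ I_n) = v ⊗ P(λ)` iff the
column shifted sum `X ⊞→ Y` equals `v ⊗ [A_k ⋯ A_0]`; and for every `w`,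
`(Λ_k(λ)ᵀ ⊗ I_m) L(λ) = wᵀ ⊗ P(λ)` iff the row shifted sum `X ⊞↓ Y`
equals `wᵀ ⊗ [A_kᵀ ⋯ A_0ᵀ]ᵀ`. -/
theorem statement_0 {F : Type*} [RCLike F] {k m n : ℕ}
    (A : Fin (k + 1) → Matrix (Fin m) (Fin n) F)
    (Xc Yc : Matrix (Fin k × Fin m) (Fin k × Fin n) F) :
    (∀ v : Fin k → F,
      RightAnsatz (matPoly A) (pencil Xc Yc) v ↔
        colShiftSum Xc Yc =
          Matrix.of fun (p : Fin k × Fin m) (q : Fin (k + 1) × Fin n) =>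
            v p.1 * A (⟨k - (q.1 : ℕ), by have := q.1.isLt; omega⟩) p.2 q.2) ∧
    (∀ w : Fin k → F,
      LeftAnsatz (matPoly A) (pencil Xc Yc) w ↔
        rowShiftSum Xc Yc =
          Matrix.of fun (p : Fin (k + 1) × Fin m) (q : Fin k × Fin n) =>
            w q.1 * A (⟨k - (p.1 : ℕ), by have := p.1.isLt; omega⟩) p.2 q.2) :=
  ⟨rightAnsatz_pencil_iff_colShiftSum A Xc Yc, leftAnsatz_pencil_iff_rowShiftSum A Xc Yc⟩
end GLin
end
end

section
/- Let P(λ) = Σ_{i=0}^k λ^i A_i be an m×n matrix polynomial of grade k with m ≥ n, and let L(λ) = λX + Y ∈ 𝕃₁(P) have right ansatz vector v ≠ 0. Suppose M₁, M₂ ∈ F^{k×k} are nonsingular matrices with M₁v = α₁e₁ and M₂v = α₂e₁ for some α₁ ≠ 0 and α₂ ≠ 0. If Z₁, Z₂ ∈ F^{(k-1)m×(k-1)n} are the matrices appearing in the Z-block of the reductions (M₁⊗I_m)L(λ) and (M₂⊗I_m)L(λ) respectively, then rank Z₁ = rank Z₂. -/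
noncomputable section

open Polynomial Matrix

namespace GLin

variable {F : Type*} [RCLike F]

/-!
`N = M₂ M₁⁻¹` maps `α₁ e₁` to `α₂ e₁`, so its first column vanishes below the diagonal and `N` is
block upper triangular. Since `M₂ = N M₁`, the last `k - 1` block rows of `(M₂ ⊗ I) Y` are
`(N₂₂ ⊗ I)` times those of `(M₁ ⊗ I) Y`; hence `Z₂ = (N₂₂ ⊗ I) Z₁` and `rank Z₂ ≤ rank Z₁`.
Exchanging the roles of `M₁` and `M₂` gives the reverse inequality.
-/

open scoped Kronecker

theorem kronId_eq_kronecker {k m : ℕ} (M : Matrix (Fin k) (Fin k) F) :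
    kronId (m := m) M = M ⊗ₖ (1 : Matrix (Fin m) (Fin m) F) := by
  ext p q
  simp [kronId, one_apply]

theorem kronId_mul {k m : ℕ} (N M : Matrix (Fin k) (Fin k) F) :
    kronId (m := m) (N * M) = kronId N * kronId M := by
  simp only [kronId_eq_kronecker, ← mul_kronecker_mul, Matrix.mul_one]

theorem kronId_mul_apply {k m : ℕ} {γ : Type*} (M : Matrix (Fin k) (Fin k) F)
    (B : Matrix (Fin k × Fin m) γ F) (p : Fin k × Fin m) (q : γ) :
    (kronId (m := m) M * B) p q = ∑ j, M p.1 j * B (j, p.2) q := by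
  rw [Matrix.mul_apply, Fintype.sum_prod_type]
  simp [kronId]

theorem kronId_mul_submatrix_succ {j m : ℕ} {γ : Type*}
    {N : Matrix (Fin (j + 1)) (Fin (j + 1)) F} (hN : ∀ i : Fin j, N i.succ 0 = 0)
    (B : Matrix (Fin (j + 1) × Fin m) γ F) :
    (kronId (m := m) N * B).submatrix (Prod.map Fin.succ id) id =
      kronId (m := m) (N.submatrix Fin.succ Fin.succ) *
        B.submatrix (Prod.map Fin.succ id) id := by
  ext p q
  simp [kronId_mul_apply, Fin.sum_univ_succ, hN]

theorem rank_Zmat1_mul_le {j m n : ℕ} {N : Matrix (Fin (j + 1)) (Fin (j + 1)) F}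
    (hN : ∀ i : Fin j, N i.succ 0 = 0) (M : Matrix (Fin (j + 1)) (Fin (j + 1)) F)
    (Yc : Matrix (Fin (j + 1) × Fin m) (Fin (j + 1) × Fin n) F) :
    (Zmat1 (N * M) Yc).rank ≤ (Zmat1 M Yc).rank := by
  -- `Zmat1` is indexed by `Fin (j + 1 - 1)`, only definitionally `Fin j`, so the identity
  -- `Z(N M) = (N₂₂ ⊗ I) Z(M)` cannot be stated as an equation of matrices and is passed to `rank`.
  convert rank_mul_le_right (kronId (m := m) (N.submatrix Fin.succ Fin.succ)) (Zmat1 M Yc)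
    using 1
  refine congrArg Matrix.rank ?_
  have h := kronId_mul_submatrix_succ hN (kronId (m := m) M * Yc)
  rw [← Matrix.mul_assoc, ← kronId_mul] at h
  exact congrArg (·.submatrix id (Prod.map Fin.castSucc id)) h

theorem e1_eq_single {j : ℕ} (α : F) : e1 (k := j + 1) α = Pi.single 0 α := by
  ext i
  by_cases hi : i = 0 <;> simp [e1, hi]

theorem apply_succ_zero_eq_zero_of_mulVec_e1 {j : ℕ} {N : Matrix (Fin (j + 1)) (Fin (j + 1)) F}
    {α β : F} (hα : α ≠ 0) (h : N *ᵥ e1 α = e1 β) (i : Fin j) : N i.succ 0 = 0 := by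
  simpa [e1_eq_single, mulVec_single, hα] using congrFun h i.succ

theorem rank_Zmat1_le {j m n : ℕ} {M M' : Matrix (Fin (j + 1)) (Fin (j + 1)) F}
    {v : Fin (j + 1) → F} {α α' : F} (hM : IsUnit M) (hα : α ≠ 0) (hv : M *ᵥ v = e1 α)
    (hv' : M' *ᵥ v = e1 α') (Yc : Matrix (Fin (j + 1) × Fin m) (Fin (j + 1) × Fin n) F) :
    (Zmat1 M' Yc).rank ≤ (Zmat1 M Yc).rank := by
  have hM' : M' * M⁻¹ * M = M' :=
    nonsing_inv_mul_cancel_right _ _ ((isUnit_iff_isUnit_det M).mp hM)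
  have hN : (M' * M⁻¹) *ᵥ e1 α = e1 α' := by rw [← hv, mulVec_mulVec, hM', hv']
  simpa only [hM'] using rank_Zmat1_mul_le (apply_succ_zero_eq_zero_of_mulVec_e1 hα hN) M Yc

theorem statement_4_general {F : Type*} [RCLike F] {k m n : ℕ} (hk : 0 < k)
    (Yc : Matrix (Fin k × Fin m) (Fin k × Fin n) F)
    (v : Fin k → F)
    (M₁ M₂ : Matrix (Fin k) (Fin k) F) (hM₁ : IsUnit M₁) (hM₂ : IsUnit M₂)
    (α₁ α₂ : F) (hα₁ : α₁ ≠ 0) (hα₂ : α₂ ≠ 0)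
    (h1 : M₁.mulVec v = e1 α₁) (h2 : M₂.mulVec v = e1 α₂) :
    (Zmat1 M₁ Yc).rank = (Zmat1 M₂ Yc).rank := by
  obtain ⟨j, rfl⟩ := Nat.exists_eq_add_one_of_ne_zero hk.ne'
  exact le_antisymm (rank_Zmat1_le hM₂ hα₂ h2 h1 Yc) (rank_Zmat1_le hM₁ hα₁ h1 h2 Yc)

/-- For `m ≥ n` and `L = λX + Y ∈ 𝕃₁(P)` with right ansatz vector
`v ≠ 0`: if `M₁, M₂` are nonsingular with `M₁v = α₁e₁`, `M₂v = α₂e₁` (`α₁, α₂ ≠ 0`), then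
the `Z`-matrices of the two reductions have the same rank. -/
theorem statement_4 {F : Type*} [RCLike F] {k m n : ℕ} (hk : 0 < k) (hmn : n ≤ m)
    (A : Fin (k + 1) → Matrix (Fin m) (Fin n) F)
    (Xc Yc : Matrix (Fin k × Fin m) (Fin k × Fin n) F)
    (v : Fin k → F) (hv : v ≠ 0)
    (hL : RightAnsatz (matPoly A) (pencil Xc Yc) v)
    (M₁ M₂ : Matrix (Fin k) (Fin k) F) (hM₁ : IsUnit M₁) (hM₂ : IsUnit M₂)
    (α₁ α₂ : F) (hα₁ : α₁ ≠ 0) (hα₂ : α₂ ≠ 0)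
    (h1 : M₁.mulVec v = e1 α₁) (h2 : M₂.mulVec v = e1 α₂) :
    (Zmat1 M₁ Yc).rank = (Zmat1 M₂ Yc).rank :=
  statement_4_general hk Yc v M₁ M₂ hM₁ hM₂ α₁ α₂ hα₁ hα₂ h1 h2

end GLin
end
end

section
/- Let P(λ) be an m×n matrix polynomial of grade k with m ≥ n, let L(λ) ∈ 𝕃₁(P) have nonzero right ansatz vector v, and let x(λ) ∈ F(λ)^n. Then Λ_k(λ)⊗x(λ) ∈ N_r(L) if and only if x(λ) ∈ N_r(P). Moreover, if L(λ) is a g-linearization of P(λ), then the map R_Λ : N_r(P) → N_r(L) given by x(λ) ↦ Λ_k(λ)⊗x(λ) is an F(λ)-linear isomorphism, and x(λ) ∈ N_r(P) is a vector polynomial if and only if Λ_k(λ)⊗x(λ) is a vector polynomial. -/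
noncomputable section

open Polynomial Matrix

namespace GLin

variable {F : Type*} [RCLike F]

/-! The ansatz identity `L (Λ_k ⊗ I_n) = v ⊗ P` gives `L (Λ_k ⊗ x) = v ⊗ (P x)`, which vanishes
exactly when `P x` does because `v ≠ 0`. The last block of `Λ_k ⊗ x` is `x` itself, so
`x ↦ Λ_k ⊗ x` is injective and `Λ_k ⊗ x` is polynomial iff `x` is. A g-linearization `L` is
unimodularly equivalent to `diag(P, I_{k-1} ⊗ I_{m,n})`, so by rank–nullity over `F(λ)` the null
spaces of the two have equal dimension; for `m ≥ n` the block `I_{m,n}` is injective, so the null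
space of the latter is `N_r(P)` placed in the first block. Hence the injective map
`N_r(P) → N_r(L)` is an isomorphism. -/

section NullSpace

variable {ρ κ γ : Type*}

theorem mem_Nr_iff [Fintype γ] {P : Matrix ρ γ F[X]} {x : γ → RatFunc F} :
    x ∈ Nr P ↔ matRF P *ᵥ x = 0 :=
  Iff.rfl

theorem matRF_mul [Fintype κ] (P : Matrix ρ κ F[X]) (Q : Matrix κ γ F[X]) :
    matRF (P * Q) = matRF P * matRF Q :=
  Matrix.map_mul

theorem isUnit_det_matRF [Fintype γ] [DecidableEq γ] {E : Matrix γ γ F[X]} (hE : IsUnit E.det) :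
    IsUnit (matRF E).det := by
  have h := hE.map (algebraMap F[X] (RatFunc F))
  rwa [RingHom.map_det] at h

theorem finrank_Nr_add_nrank [Fintype γ] (P : Matrix ρ γ F[X]) :
    Module.finrank (RatFunc F) (Nr P) + nrank P = Fintype.card γ := by
  rw [add_comm, nrank, Matrix.rank, Nr, LinearMap.finrank_range_add_finrank_ker,
    Module.finrank_fintype_fun_eq_card]

theorem finrank_Nr_mul_mul_of_isUnit_det [Fintype ρ] [Fintype γ] [DecidableEq ρ] [DecidableEq γ]
    {E : Matrix ρ ρ F[X]} {G : Matrix γ γ F[X]} (hE : IsUnit E.det) (hG : IsUnit G.det)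
    (L : Matrix ρ γ F[X]) :
    Module.finrank (RatFunc F) (Nr (E * L * G)) = Module.finrank (RatFunc F) (Nr L) := by
  have hrank : nrank (E * L * G) = nrank L := by
    rw [nrank, nrank, matRF_mul, matRF_mul,
      Matrix.rank_mul_eq_left_of_isUnit_det _ _ (isUnit_det_matRF hG),
      Matrix.rank_mul_eq_right_of_isUnit_det _ _ (isUnit_det_matRF hE)]
  have := finrank_Nr_add_nrank (E * L * G)
  have := finrank_Nr_add_nrank L
  omega

end NullSpace

section GLinTarget

variable {k m n : ℕ}

def firstBlockInclusion (R : Type*) [Semiring R] (k n : ℕ) :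
    (Fin n → R) →ₗ[R] (Fin k × Fin n → R) :=
  LinearMap.pi fun q => if (q.1 : ℕ) = 0 then LinearMap.proj q.2 else 0

theorem firstBlockInclusion_apply {R : Type*} [Semiring R] (x : Fin n → R) (q : Fin k × Fin n) :
    firstBlockInclusion R k n x q = if (q.1 : ℕ) = 0 then x q.2 else 0 := by
  simp only [firstBlockInclusion, LinearMap.pi_apply]
  split_ifs <;> rfl

theorem firstBlockInclusion_injective {R : Type*} [Semiring R] (hk : 0 < k) :
    Function.Injective (firstBlockInclusion R k n) := fun x y hxy => funext fun c => by
  simpa [firstBlockInclusion_apply] using congrFun hxy (⟨0, hk⟩, c)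

theorem matRF_glinTarget_mulVec_apply (P : Matrix (Fin m) (Fin n) F[X])
    (y : Fin k × Fin n → RatFunc F) (i : Fin k) (r : Fin m) :
    (matRF (glinTarget P) *ᵥ y) (i, r) =
      if (i : ℕ) = 0 then (matRF P *ᵥ fun c => y (i, c)) r
      else ∑ c : Fin n, if (r : ℕ) = c then y (i, c) else 0 := by
  simp only [Matrix.mulVec, dotProduct, matRF, Matrix.map_apply, glinTarget, Matrix.of_apply,
    Fintype.sum_prod_type]
  split_ifs <;> simp [apply_ite (algebraMap F[X] (RatFunc F)), ite_mul, Finset.sum_ite_eq, *]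

theorem mem_Nr_glinTarget_iff (hk : 0 < k) (hmn : n ≤ m) (P : Matrix (Fin m) (Fin n) F[X])
    (y : Fin k × Fin n → RatFunc F) :
    y ∈ Nr (glinTarget P) ↔
      (fun c => y (⟨0, hk⟩, c)) ∈ Nr P ∧ ∀ q : Fin k × Fin n, (q.1 : ℕ) ≠ 0 → y q = 0 := by
  simp only [mem_Nr_iff, funext_iff, Prod.forall, Pi.zero_apply, matRF_glinTarget_mulVec_apply]
  constructor
  · intro h
    refine ⟨fun r => by simpa using h ⟨0, hk⟩ r, fun i c hi => ?_⟩
    -- row `c` of the identity block `I_{m,n}` exists because `n ≤ m`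
    simpa [hi, Fin.val_inj] using h i (Fin.castLE hmn c)
  · rintro ⟨h0, hz⟩ i r
    split_ifs with hi
    · obtain rfl : i = ⟨0, hk⟩ := Fin.ext hi
      exact h0 r
    · simp [hz i _ hi]

theorem map_firstBlockInclusion_Nr (hk : 0 < k) (hmn : n ≤ m)
    (P : Matrix (Fin m) (Fin n) F[X]) :
    (Nr P).map (firstBlockInclusion (RatFunc F) k n) = Nr (glinTarget P) := by
  ext y
  rw [mem_Nr_glinTarget_iff hk hmn]
  constructor
  · rintro ⟨x, hx, rfl⟩
    simp_all [firstBlockInclusion_apply]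
  · rintro ⟨h0, hz⟩
    refine ⟨_, h0, funext fun q => ?_⟩
    rw [firstBlockInclusion_apply]
    split_ifs with hq
    · rw [show (⟨0, hk⟩ : Fin k) = q.1 from Fin.ext hq.symm]
    · exact (hz q hq).symm

theorem finrank_Nr_glinTarget (hk : 0 < k) (hmn : n ≤ m) (P : Matrix (Fin m) (Fin n) F[X]) :
    Module.finrank (RatFunc F) (Nr (glinTarget (k := k) P)) =
      Module.finrank (RatFunc F) (Nr P) := by
  rw [← map_firstBlockInclusion_Nr hk hmn]
  exact (Submodule.equivMapOfInjective _ (firstBlockInclusion_injective hk) _).finrank_eq.symm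

theorem IsGLin.finrank_Nr_eq (hk : 0 < k) (hmn : n ≤ m) {P : Matrix (Fin m) (Fin n) F[X]}
    {L : Matrix (Fin k × Fin m) (Fin k × Fin n) F[X]} (hGL : IsGLin P L) :
    Module.finrank (RatFunc F) (Nr L) = Module.finrank (RatFunc F) (Nr P) := by
  obtain ⟨E, G, hE, hG, hEG⟩ := hGL
  rw [← finrank_Nr_mul_mul_of_isUnit_det hE hG, hEG, finrank_Nr_glinTarget hk hmn]

end GLinTarget

section Ansatz

variable {k m n : ℕ}

theorem lamTensor_eq_mulVec (x : Fin n → RatFunc F) :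
    lamTensor k x = matRF (Lam F k n) *ᵥ x := by
  funext p
  simp [lamTensor, matRF, Lam, Matrix.mulVec, dotProduct, apply_ite (algebraMap F[X] (RatFunc F))]

theorem lamTensor_injective (hk : 0 < k) :
    Function.Injective (lamTensor (F := F) (n := n) k) := fun x y hxy => funext fun c => by
  simpa [lamTensor] using congrFun hxy (⟨k - 1, by omega⟩, c)

theorem isVecPoly_lamTensor_iff (hk : 0 < k) (x : Fin n → RatFunc F) :
    IsVecPoly (lamTensor k x) ↔ IsVecPoly x := by
  constructor
  · rintro ⟨p, hp⟩
    exact ⟨fun c => p (⟨k - 1, by omega⟩, c), funext fun c => by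
      simpa [lamTensor, polyVec] using congrFun hp (⟨k - 1, by omega⟩, c)⟩
  · rintro ⟨p, rfl⟩
    exact ⟨fun q => X ^ (k - 1 - (q.1 : ℕ)) * p q.2, by
      funext q; simp [lamTensor, polyVec]⟩

theorem RightAnsatz.mulVec_lamTensor {P : Matrix (Fin m) (Fin n) F[X]}
    {L : Matrix (Fin k × Fin m) (Fin k × Fin n) F[X]} {v : Fin k → F}
    (hL : RightAnsatz P L v) (x : Fin n → RatFunc F) :
    matRF L *ᵥ lamTensor k x =
      fun p => algebraMap F[X] (RatFunc F) (C (v p.1)) * (matRF P *ᵥ x) p.2 := by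
  rw [lamTensor_eq_mulVec, Matrix.mulVec_mulVec, ← matRF_mul, hL]
  funext p
  simp [matRF, vkron, Matrix.mulVec, dotProduct, Finset.mul_sum, mul_assoc]

theorem RightAnsatz.lamTensor_mem_Nr_iff {P : Matrix (Fin m) (Fin n) F[X]}
    {L : Matrix (Fin k × Fin m) (Fin k × Fin n) F[X]} {v : Fin k → F}
    (hL : RightAnsatz P L v) (hv : v ≠ 0) (x : Fin n → RatFunc F) :
    lamTensor k x ∈ Nr L ↔ x ∈ Nr P := by
  obtain ⟨i, hi⟩ := Function.ne_iff.mp hv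
  simp only [mem_Nr_iff, hL.mulVec_lamTensor, funext_iff, Prod.forall, Pi.zero_apply,
    mul_eq_zero, FaithfulSMul.algebraMap_eq_zero_iff, C_eq_zero]
  constructor
  · intro h r
    exact (h i r).resolve_left hi
  · intro h _ r
    exact Or.inr (h r)

theorem RightAnsatz.exists_linearEquiv_Nr (hk : 0 < k) (hmn : n ≤ m)
    {P : Matrix (Fin m) (Fin n) F[X]} {L : Matrix (Fin k × Fin m) (Fin k × Fin n) F[X]}
    {v : Fin k → F} (hL : RightAnsatz P L v) (hv : v ≠ 0) (hGL : IsGLin P L) :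
    ∃ e : Nr P ≃ₗ[RatFunc F] Nr L, ∀ x : Nr P,
      (e x : Fin k × Fin n → RatFunc F) = lamTensor k (x : Fin n → RatFunc F) := by
  have hmaps : ∀ x ∈ Nr P, (matRF (Lam F k n)).mulVecLin x ∈ Nr L := fun x hx => by
    simpa [lamTensor_eq_mulVec] using (hL.lamTensor_mem_Nr_iff hv x).mpr hx
  let f := (matRF (Lam F k n)).mulVecLin.restrict hmaps
  have hf : ∀ x, (f x : Fin k × Fin n → RatFunc F) = lamTensor k x := fun x =>
    (lamTensor_eq_mulVec _).symm
  have hinj : Function.Injective f := fun x y hxy => Subtype.ext <|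
    lamTensor_injective hk (by rw [← hf, ← hf, hxy])
  exact ⟨f.linearEquivOfInjective hinj (hGL.finrank_Nr_eq hk hmn).symm, hf⟩

end Ansatz

/-- For `m ≥ n` and `L ∈ 𝕃₁(P)` with nonzero right ansatz vector `v`:
`Λ_k(λ) ⊗ x(λ) ∈ N_r(L)` iff `x(λ) ∈ N_r(P)`; moreover if `L` is a g-linearization of `P`
then `x ↦ Λ_k(λ) ⊗ x` is an `F(λ)`-linear isomorphism `N_r(P) ≃ N_r(L)`, and
`x ∈ N_r(P)` is a vector polynomial iff `Λ_k(λ) ⊗ x` is a vector polynomial. -/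
theorem statement_6 {F : Type*} [RCLike F] {k m n : ℕ} (hk : 0 < k) (hmn : n ≤ m)
    (A : Fin (k + 1) → Matrix (Fin m) (Fin n) F)
    (Xc Yc : Matrix (Fin k × Fin m) (Fin k × Fin n) F)
    (v : Fin k → F) (hv : v ≠ 0)
    (hL : RightAnsatz (matPoly A) (pencil Xc Yc) v) :
    (∀ x : Fin n → RatFunc F,
      lamTensor k x ∈ Nr (pencil Xc Yc) ↔ x ∈ Nr (matPoly A)) ∧
    (IsGLin (matPoly A) (pencil Xc Yc) →
      (∃ e : Nr (matPoly A) ≃ₗ[RatFunc F] Nr (pencil Xc Yc),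
        ∀ x : Nr (matPoly A),
          (e x : Fin k × Fin n → RatFunc F) = lamTensor k (x : Fin n → RatFunc F)) ∧
      (∀ x : Fin n → RatFunc F, x ∈ Nr (matPoly A) →
        (IsVecPoly x ↔ IsVecPoly (lamTensor k x)))) :=
  ⟨hL.lamTensor_mem_Nr_iff hv, fun hGL =>
    ⟨hL.exists_linearEquiv_Nr hk hmn hv hGL, fun x _ => (isVecPoly_lamTensor_iff hk x).symm⟩⟩

end GLin
end
end
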